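/- Let Λ be a finite-dimensional algebra over an algebraically closed field k, and let (T, F) be a torsion pair in mod Λ. Then (T, F) is splitting if and only if for every module M in T, the inverse Auslander–Reiten translate τ⁻¹M also lies in T. -/

import Mathlib

open CategoryTheory CategoryTheory.Limits

universe u

section Prelude
variable {A : Type u} [Ring A]

/-- finite direct sum of `d` copies of `T` -/
noncomputable def copies (A : Type u) [Ring A] (T : ModuleCat.{u} A) (d : ℕ) :
    ModuleCat.{u} A := ModuleCat.of A (Fin d → T)

/-- `M` is generated by `T`. -/
def IsGenBy (T M : ModuleCat.{u} A) : Prop :=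
  ∃ (d : ℕ) (f : copies A T d ⟶ M), Function.Surjective f

/-- `M` is cogenerated by `T`. -/
def IsCogenBy (T M : ModuleCat.{u} A) : Prop :=
  ∃ (d : ℕ) (f : M ⟶ copies A T d), Function.Injective f

/-- `M` lies in `add T`: it is a direct summand of a finite direct sum of copies of `T`. -/
def InAdd (T M : ModuleCat.{u} A) : Prop :=
  ∃ (d : ℕ) (i : M ⟶ copies A T d) (p : copies A T d ⟶ M), i ≫ p = 𝟙 M

/-- `N` is a direct summand of `D`. -/
def IsSummand (N D : ModuleCat.{u} A) : Prop :=
  ∃ (i : N ⟶ D) (p : D ⟶ N), i ≫ p = 𝟙 N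

/-- Indecomposable module: nonzero and no nontrivial idempotent endomorphism. -/
def Indec (M : ModuleCat.{u} A) : Prop :=
  ¬ IsZero M ∧ ∀ e : M ⟶ M, e ≫ e = e → e = 0 ∨ e = 𝟙 M

/-- `0 → L → E → M → 0` is a short exact sequence. -/
def IsSES {L E M : ModuleCat.{u} A} (f : L ⟶ E) (g : E ⟶ M) : Prop :=
  Function.Injective f ∧ Function.Surjective g ∧ Function.Exact f g

/-- projective dimension at most `n`. -/
def ProjDimLE : ℕ → ModuleCat.{u} A → Prop
  | 0, M => Projective M
  | n+1, M => Projective M ∨ ∃ (K P : ModuleCat.{u} A) (f : K ⟶ P) (g : P ⟶ M),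
      Projective P ∧ Module.Finite A K ∧ IsSES f g ∧ ProjDimLE n K

/-- injective dimension at most `n`. -/
def InjDimLE : ℕ → ModuleCat.{u} A → Prop
  | 0, M => Injective M
  | n+1, M => Injective M ∨ ∃ (I C : ModuleCat.{u} A) (f : M ⟶ I) (g : I ⟶ C),
      Injective I ∧ Module.Finite A C ∧ IsSES f g ∧ InjDimLE n C

/-- global dimension at most `n` (tested on finitely generated modules). -/
def GlobalDimLE (A : Type u) [Ring A] (n : ℕ) : Prop :=
  ∀ M : ModuleCat.{u} A, Module.Finite A M → ProjDimLE n M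

/-- global dimension equal to `2`. -/
def GlobalDimEq2 (A : Type u) [Ring A] : Prop :=
  GlobalDimLE A 2 ∧ ¬ GlobalDimLE A 1

/-- dominant dimension at least 2 : there is an exact sequence `0 → A → I₀ → I₁`
with `I₀, I₁` projective-injective. -/
def DomDimGE2 (A : Type u) [Ring A] : Prop :=
  ∃ (I₀ I₁ : ModuleCat.{u} A) (f : ModuleCat.of A A ⟶ I₀) (g : I₀ ⟶ I₁),
    Injective I₀ ∧ Projective I₀ ∧ Injective I₁ ∧ Projective I₁ ∧
    Function.Injective f ∧ Function.Exact f g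

/-- `Ext¹(X, Y) = 0`, expressed by the splitting of all short exact sequences
`0 → Y → E → X → 0`. -/
def Ext1Vanish (X Y : ModuleCat.{u} A) : Prop :=
  ∀ (E : ModuleCat.{u} A) (f : Y ⟶ E) (g : E ⟶ X),
    IsSES f g → ∃ s : X ⟶ E, s ≫ g = 𝟙 X

/-- `T` is a tilting module. -/
structure IsTilting (T : ModuleCat.{u} A) : Prop where
  fg : Module.Finite A T
  pd : ProjDimLE 1 T
  rigid : Ext1Vanish T T
  cores : ∃ (T₀ T₁ : ModuleCat.{u} A) (f : ModuleCat.of A A ⟶ T₀) (g : T₀ ⟶ T₁),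
    IsSES f g ∧ InAdd T T₀ ∧ InAdd T T₁

/-- `T` is a cotilting module. -/
structure IsCotilting (T : ModuleCat.{u} A) : Prop where
  fg : Module.Finite A T
  id : InjDimLE 1 T
  rigid : Ext1Vanish T T
  res : ∀ I : ModuleCat.{u} A, Module.Finite A I → Injective I →
    ∃ (T₁ T₀ : ModuleCat.{u} A) (f : T₁ ⟶ T₀) (g : T₀ ⟶ I),
      IsSES f g ∧ InAdd T T₀ ∧ InAdd T T₁

/-- `0 → L → E → M → 0` is an almost split (Auslander–Reiten) sequence. -/
structure IsAlmostSplit {L E M : ModuleCat.{u} A} (f : L ⟶ E) (g : E ⟶ M) : Prop where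
  ses : IsSES f g
  not_split : ¬ ∃ s : M ⟶ E, s ≫ g = 𝟙 M
  indec_left : Indec L
  indec_right : Indec M
  right_almost : ∀ (X : ModuleCat.{u} A) (h : X ⟶ M),
    (¬ ∃ s : M ⟶ X, s ≫ h = 𝟙 M) → ∃ t : X ⟶ E, t ≫ g = h
  left_almost : ∀ (X : ModuleCat.{u} A) (h : L ⟶ X),
    (¬ ∃ r : X ⟶ L, h ≫ r = 𝟙 L) → ∃ t : E ⟶ X, f ≫ t = h

/-- The Auslander–Reiten translation `τ` (and its inverse `τ⁻¹`),
characterized by almost split sequences. -/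
structure ARTranslation (A : Type u) [Ring A] where
  τ : ModuleCat.{u} A → ModuleCat.{u} A
  τinv : ModuleCat.{u} A → ModuleCat.{u} A
  fg_τ : ∀ M : ModuleCat.{u} A, Module.Finite A M → Module.Finite A (τ M)
  fg_τinv : ∀ M : ModuleCat.{u} A, Module.Finite A M → Module.Finite A (τinv M)
  τ_proj : ∀ M : ModuleCat.{u} A, Module.Finite A M → Projective M → IsZero (τ M)
  τinv_inj : ∀ M : ModuleCat.{u} A, Module.Finite A M → Injective M → IsZero (τinv M)
  τ_spec : ∀ M : ModuleCat.{u} A, Module.Finite A M → Indec M → ¬ Projective M →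
    ∃ (E : ModuleCat.{u} A) (f : τ M ⟶ E) (g : E ⟶ M), IsAlmostSplit f g
  τinv_spec : ∀ M : ModuleCat.{u} A, Module.Finite A M → Indec M → ¬ Injective M →
    ∃ (E : ModuleCat.{u} A) (f : M ⟶ E) (g : E ⟶ τinv M), IsAlmostSplit f g
  τ_iso : ∀ M N : ModuleCat.{u} A, Nonempty (M ≅ N) → Nonempty (τ M ≅ τ N)
  τinv_iso : ∀ M N : ModuleCat.{u} A, Nonempty (M ≅ N) → Nonempty (τinv M ≅ τinv N)
  τ_add : ∀ M N : ModuleCat.{u} A, Nonempty (τ (M ⊞ N) ≅ τ M ⊞ τ N)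
  τinv_add : ∀ M N : ModuleCat.{u} A, Nonempty (τinv (M ⊞ N) ≅ τinv M ⊞ τinv N)

/-- A torsion pair `(T, F)` in `mod A`. -/
structure TorsionPair (A : Type u) [Ring A] where
  tors : Set (ModuleCat.{u} A)
  free : Set (ModuleCat.{u} A)
  fg_tors : ∀ M ∈ tors, Module.Finite A M
  fg_free : ∀ N ∈ free, Module.Finite A N
  hom_zero : ∀ M ∈ tors, ∀ N ∈ free, ∀ f : M ⟶ N, f = 0
  max_tors : ∀ M : ModuleCat.{u} A, Module.Finite A M →
    (∀ N ∈ free, ∀ f : M ⟶ N, f = 0) → M ∈ tors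
  max_free : ∀ N : ModuleCat.{u} A, Module.Finite A N →
    (∀ M ∈ tors, ∀ f : M ⟶ N, f = 0) → N ∈ free

/-- A torsion pair is splitting if every f.g. indecomposable lies in one of the classes. -/
def TorsionPair.Splitting (P : TorsionPair A) : Prop :=
  ∀ M : ModuleCat.{u} A, Module.Finite A M → Indec M → M ∈ P.tors ∨ M ∈ P.free

/-- Membership in `C_Λ = Gen(Q̃) ∩ Cogen(Q̃)`, `Q̃` the sum of the indecomposable
projective-injective modules: generated and cogenerated by a projective-injective module. -/
def InC (M : ModuleCat.{u} A) : Prop :=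
  (∃ Q : ModuleCat.{u} A, Module.Finite A Q ∧ Projective Q ∧ Injective Q ∧ IsGenBy Q M) ∧
  (∃ Q : ModuleCat.{u} A, Module.Finite A Q ∧ Projective Q ∧ Injective Q ∧ IsCogenBy Q M)

/-- `K` is a syzygy of `M`: kernel of an epimorphism from a f.g. projective onto `M`. -/
def IsSyzygy (K M : ModuleCat.{u} A) : Prop :=
  ∃ (P : ModuleCat.{u} A) (f : K ⟶ P) (g : P ⟶ M),
    Projective P ∧ Module.Finite A P ∧ IsSES f g

/-- `g : P ⟶ M` is a projective cover. -/
def IsProjCover {P M : ModuleCat.{u} A} (g : P ⟶ M) : Prop :=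
  Projective P ∧ Module.Finite A P ∧ Function.Surjective g ∧
    ∀ (X : ModuleCat.{u} A) (h : X ⟶ P), Function.Surjective (h ≫ g) → Function.Surjective h

/-- `K` is the minimal syzygy `Ω M`: kernel of a projective cover of `M`. -/
def IsMinSyzygy (K M : ModuleCat.{u} A) : Prop :=
  ∃ (P : ModuleCat.{u} A) (f : K ⟶ P) (g : P ⟶ M), IsSES f g ∧ IsProjCover g

/-- `C` is a cosyzygy of `M`: cokernel of a monomorphism from `M` into a f.g. injective. -/
def IsCosyzygy (C M : ModuleCat.{u} A) : Prop :=
  ∃ (I : ModuleCat.{u} A) (f : M ⟶ I) (g : I ⟶ C),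
    Injective I ∧ Module.Finite A I ∧ IsSES f g

/-- `M` is basic: no indecomposable occurs twice in a decomposition. -/
def IsBasic (M : ModuleCat.{u} A) : Prop :=
  ∀ X : ModuleCat.{u} A, Indec X → ¬ IsSummand (X ⊞ X) M

/-- `D` is a basic f.g. injective cogenerator (i.e. `D ≅ DA`). -/
def IsMinimalInjectiveCogenerator (D : ModuleCat.{u} A) : Prop :=
  Module.Finite A D ∧ Injective D ∧ IsBasic D ∧
    ∀ M : ModuleCat.{u} A, Module.Finite A M → IsCogenBy D M

end Prelude

/-- a tilted algebra: the endomorphism algebra of a tilting module over a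
finite-dimensional hereditary algebra. -/
structure TiltedWitness (k : Type u) [Field k] (A : Type u) [Ring A] [Algebra k A] where
  H : Type u
  [ringH : Ring H]
  [algH : Algebra k H]
  findim : FiniteDimensional k H
  hered : ∀ M : ModuleCat.{u} H, Module.Finite H M → ProjDimLE 1 M
  T : Type u
  [acg : AddCommGroup T]
  [modH : Module H T]
  [modk : Module k T]
  [tower : IsScalarTower k H T]
  [scc : SMulCommClass H k T]
  tilt : IsTilting (ModuleCat.of H T)
  iso : Nonempty (A ≃ₐ[k] (T →ₗ[H] T))

def IsTiltedAlg (k : Type u) [Field k] (A : Type u) [Ring A] [Algebra k A] : Prop :=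
  Nonempty (TiltedWitness k A)

/-!
(⇒) Let `X ∈ T` be indecomposable and not injective, with almost split sequence
`0 → X → E → τ⁻¹X → 0`. The module `τ⁻¹X` is indecomposable, hence in `T` or `F`. If it were in
`F`, then, since the pair splits, `E` is the direct sum of a torsion and a torsion-free module,
and the projection of `E` onto its torsion part fixes `X` and kills `τ⁻¹X`; this splits the
sequence. Additivity of `τ⁻¹` and induction on decompositions extend this to all of `T`.

(⇐) If an indecomposable `M` lies in neither class, its torsion submodule `tM` is nonzero;
take an indecomposable summand `Y` of `tM`. The inclusion `Y → M` is not a split mono, so it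
factors through the left almost split map `Y → E`. The factorisation `E → M` lands in `tM`,
because `E → M/tM` factors through `τ⁻¹Y ∈ T`. Hence `Y → E` is a split mono, a contradiction.
-/

section

variable {A : Type u} [Ring A]

theorem exists_comp_eq_of_exact {L E M V : ModuleCat.{u} A} {f : L ⟶ E} {g : E ⟶ M}
    (hg : Function.Surjective g) (hfg : Function.Exact f g) (v : E ⟶ V) (hv : f ≫ v = 0) :
    ∃ w : M ⟶ V, g ≫ w = v := by
  have hle : LinearMap.range f.hom ≤ LinearMap.ker v.hom := by
    rintro _ ⟨x, rfl⟩
    exact congr($hv x)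
  refine ⟨ModuleCat.ofHom ((LinearMap.range f.hom).liftQ v.hom hle ∘ₗ
    (hfg.linearEquivOfSurjective hg).symm.toLinearMap), ?_⟩
  ext x
  simp

theorem IsSES.exists_section_of_retraction {L E M : ModuleCat.{u} A} {f : L ⟶ E} {g : E ⟶ M}
    (h : IsSES f g) {r : E ⟶ L} (hr : f ≫ r = 𝟙 L) : ∃ s : M ⟶ E, s ≫ g = 𝟙 M := by
  obtain ⟨s, hs⟩ := ((h.2.2.split_tfae (f := f.hom) (g := g.hom) h.1 h.2.1).out 1 0).mp
    (show ∃ l, l ∘ₗ f.hom = LinearMap.id from ⟨r.hom, congr(ModuleCat.Hom.hom $hr)⟩)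
  exact ⟨ModuleCat.ofHom s, ModuleCat.hom_ext hs⟩

theorem IsAlmostSplit.not_exists_retraction {L E M : ModuleCat.{u} A} {f : L ⟶ E} {g : E ⟶ M}
    (h : IsAlmostSplit f g) : ¬ ∃ r : E ⟶ L, f ≫ r = 𝟙 L :=
  fun ⟨_, hr⟩ => h.not_split (h.ses.exists_section_of_retraction hr)

theorem Indec.nonempty_iso_of_retract {X M : ModuleCat.{u} A} (hM : Indec M) (hX : ¬ IsZero X)
    {j : X ⟶ M} {r : M ⟶ X} (hjr : j ≫ r = 𝟙 X) : Nonempty (X ≅ M) := by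
  have hidem : (r ≫ j) ≫ (r ≫ j) = r ≫ j := by simp [reassoc_of% hjr]
  rcases hM.2 (r ≫ j) hidem with h0 | h1
  · refine absurd ((IsZero.iff_id_eq_zero X).mpr ?_) hX
    calc 𝟙 X = (j ≫ r) ≫ (j ≫ r) := by rw [hjr, Category.id_comp]
      _ = j ≫ (r ≫ j) ≫ r := by simp only [Category.assoc]
      _ = 0 := by simp [h0]
  · exact ⟨⟨j, r, hjr, h1⟩⟩

noncomputable def ModuleCat.isoBiprodRangeKer {M : ModuleCat.{u} A} {e : M ⟶ M}
    (he : e ≫ e = e) :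
    M ≅ ModuleCat.of A (LinearMap.range e.hom) ⊞ ModuleCat.of A (LinearMap.ker e.hom) :=
  have hidem : IsIdempotentElem e.hom := congr(ModuleCat.Hom.hom $he)
  (Submodule.prodEquivOfIsCompl _ _ (LinearMap.IsIdempotentElem.isCompl hidem)).toModuleIso.symm
    ≪≫ (ModuleCat.biprodIsoProd (.of A (LinearMap.range e.hom)) (.of A (LinearMap.ker e.hom))).symm

theorem ModuleCat.induction_on_indec [IsArtinianRing A] {Q : ModuleCat.{u} A → Prop}
    (hiso : ∀ {X Y : ModuleCat.{u} A}, (X ≅ Y) → Q X → Q Y)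
    (hzero : ∀ X : ModuleCat.{u} A, IsZero X → Q X)
    (hindec : ∀ X : ModuleCat.{u} A, Module.Finite A X → Indec X → Q X)
    (hbiprod : ∀ X Y : ModuleCat.{u} A, Q X → Q Y → Q (X ⊞ Y))
    (M : ModuleCat.{u} A) [Module.Finite A M] : Q M := by
  induction hn : Module.length A M using WellFoundedLT.induction generalizing M with
  | ind n ih =>
  by_cases hz : IsZero M
  · exact hzero M hz
  by_cases hi : Indec M
  · exact hindec M inferInstance hi
  obtain ⟨e, he, he0, he1⟩ : ∃ e : M ⟶ M, e ≫ e = e ∧ e ≠ 0 ∧ e ≠ 𝟙 M := by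
    simpa [Indec, hz, not_or] using hi
  have hidem : ∀ x, e (e x) = e x := fun x => congr($he x)
  have hrange : LinearMap.range e.hom ≠ ⊤ := by
    refine fun htop => he1 ?_
    ext x
    obtain ⟨y, rfl⟩ := LinearMap.range_eq_top.mp htop x
    exact hidem y
  have hker : LinearMap.ker e.hom ≠ ⊤ := by
    refine fun htop => he0 ?_
    ext x
    exact LinearMap.congr_fun (LinearMap.ker_eq_top.mp htop) x
  refine hiso (ModuleCat.isoBiprodRangeKer he).symm (hbiprod _ _ ?_ ?_)
  · exact ih _ (hn ▸ Submodule.length_lt hrange) _ rfl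
  · exact ih _ (hn ▸ Submodule.length_lt hker) _ rfl

theorem IsSummand.trans {X Y Z : ModuleCat.{u} A} (hXY : IsSummand X Y) (hYZ : IsSummand Y Z) :
    IsSummand X Z := by
  obtain ⟨i, p, hip⟩ := hXY
  obtain ⟨i', p', hip'⟩ := hYZ
  exact ⟨i ≫ i', p' ≫ p, by simp [reassoc_of% hip', hip]⟩

theorem IsSummand.of_iso {X Y : ModuleCat.{u} A} (e : X ≅ Y) : IsSummand X Y :=
  ⟨e.hom, e.inv, e.hom_inv_id⟩

theorem isSummand_biprod_left (X Y : ModuleCat.{u} A) : IsSummand X (X ⊞ Y) :=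
  ⟨biprod.inl, biprod.fst, biprod.inl_fst⟩

theorem isSummand_biprod_right (X Y : ModuleCat.{u} A) : IsSummand Y (X ⊞ Y) :=
  ⟨biprod.inr, biprod.snd, biprod.inr_snd⟩

theorem ModuleCat.exists_indec_isSummand [IsArtinianRing A] (M : ModuleCat.{u} A)
    [Module.Finite A M] (hM : ¬ IsZero M) : ∃ Y, Indec Y ∧ IsSummand Y M := by
  revert hM
  refine ModuleCat.induction_on_indec (Q := fun M => ¬ IsZero M → ∃ Y, Indec Y ∧ IsSummand Y M)
    ?_ (fun X hX hX' => absurd hX hX') (fun X _ hX _ => ⟨X, hX, .of_iso (Iso.refl X)⟩) ?_ M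
  · intro X Y e hX hY
    obtain ⟨Z, hZ, hZX⟩ := hX (fun h => hY (h.of_iso e.symm))
    exact ⟨Z, hZ, hZX.trans (.of_iso e)⟩
  · intro X Y hX hY hXY
    by_cases hX0 : IsZero X
    · obtain ⟨Z, hZ, hZY⟩ := hY fun hY0 => hXY ((biprod_isZero_iff X Y).mpr ⟨hX0, hY0⟩)
      exact ⟨Z, hZ, hZY.trans (isSummand_biprod_right X Y)⟩
    · obtain ⟨Z, hZ, hZX⟩ := hX hX0
      exact ⟨Z, hZ, hZX.trans (isSummand_biprod_left X Y)⟩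

namespace TorsionPair

variable (P : TorsionPair A)

theorem mem_tors_of_surjective {X Y : ModuleCat.{u} A} (g : X ⟶ Y) (hg : Function.Surjective g)
    (hX : X ∈ P.tors) : Y ∈ P.tors := by
  have := P.fg_tors X hX
  have : Epi g := (ModuleCat.epi_iff_surjective g).mpr hg
  refine P.max_tors Y (.of_surjective g.hom hg) fun N hN f => ?_
  rw [← cancel_epi g, P.hom_zero X hX N hN (g ≫ f), comp_zero]

theorem mem_tors_of_iso {X Y : ModuleCat.{u} A} (e : X ≅ Y) (hX : X ∈ P.tors) : Y ∈ P.tors :=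
  P.mem_tors_of_surjective e.hom e.toLinearEquiv.surjective hX

theorem mem_tors_of_isSummand {X Y : ModuleCat.{u} A} (h : IsSummand X Y) (hY : Y ∈ P.tors) :
    X ∈ P.tors := by
  obtain ⟨i, p, hip⟩ := h
  exact P.mem_tors_of_surjective p (fun x => ⟨i x, congr($hip x)⟩) hY

theorem zero_mem_tors {Z : ModuleCat.{u} A} (hZ : IsZero Z) : Z ∈ P.tors := by
  have := ModuleCat.subsingleton_of_isZero hZ
  exact P.max_tors Z inferInstance fun _ _ _ => hZ.eq_of_src _ _

theorem biprod_mem_tors {X Y : ModuleCat.{u} A} (hX : X ∈ P.tors) (hY : Y ∈ P.tors) :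
    (X ⊞ Y : ModuleCat.{u} A) ∈ P.tors := by
  have := P.fg_tors X hX
  have := P.fg_tors Y hY
  refine P.max_tors _ (.equiv (ModuleCat.biprodIsoProd X Y).symm.toLinearEquiv)
    fun N hN f => biprod.hom_ext' _ _ ?_ ?_
  · simpa using P.hom_zero X hX N hN _
  · simpa using P.hom_zero Y hY N hN _

theorem mem_tors_of_isSES {L E M : ModuleCat.{u} A} {f : L ⟶ E} {g : E ⟶ M} (h : IsSES f g)
    (hL : L ∈ P.tors) (hM : M ∈ P.tors) : E ∈ P.tors := by
  have := P.fg_tors L hL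
  have := P.fg_tors M hM
  refine P.max_tors E (.of_exact (f := f.hom) (g := g.hom) h.2.2 h.2.1) fun N hN v => ?_
  obtain ⟨w, rfl⟩ := exists_comp_eq_of_exact h.2.1 h.2.2 v (P.hom_zero L hL N hN _)
  rw [P.hom_zero M hM N hN w, comp_zero]

theorem range_mem_tors {X : ModuleCat.{u} A} {N : Type u} [AddCommGroup N] [Module A N]
    (f : X →ₗ[A] N) (hX : X ∈ P.tors) : ModuleCat.of A (LinearMap.range f) ∈ P.tors :=
  P.mem_tors_of_surjective (ModuleCat.ofHom f.rangeRestrict) f.surjective_rangeRestrict hX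

theorem sup_mem_tors {M : Type u} [AddCommGroup M] [Module A M] {p q : Submodule A M}
    (hp : ModuleCat.of A p ∈ P.tors) (hq : ModuleCat.of A q ∈ P.tors) :
    ModuleCat.of A ↥(p ⊔ q) ∈ P.tors := by
  have hprod : ModuleCat.of A (p × q) ∈ P.tors :=
    P.mem_tors_of_iso (ModuleCat.biprodIsoProd _ _) (P.biprod_mem_tors hp hq)
  have := P.range_mem_tors (X := ModuleCat.of A (p × q)) (p.subtype.coprod q.subtype) hprod
  rwa [LinearMap.range_coprod, Submodule.range_subtype, Submodule.range_subtype] at this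

theorem exists_greatest_torsion_submodule {M : Type u} [AddCommGroup M] [Module A M]
    [IsNoetherian A M] :
    ∃ t : Submodule A M, ModuleCat.of A t ∈ P.tors ∧
      ∀ p : Submodule A M, ModuleCat.of A p ∈ P.tors → p ≤ t := by
  obtain ⟨t, ht, hmax⟩ := set_has_maximal_iff_noetherian.mpr inferInstance
    {p : Submodule A M | ModuleCat.of A p ∈ P.tors}
    ⟨⊥, P.zero_mem_tors (ModuleCat.isZero_of_subsingleton _)⟩
  refine ⟨t, ht, fun p hp => ?_⟩
  by_contra hpt
  exact hmax _ (P.sup_mem_tors hp ht) (right_lt_sup.mpr hpt)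

theorem quotient_mem_free_of_greatest {M : Type u} [AddCommGroup M] [Module A M]
    [IsNoetherian A M] {t : Submodule A M} (ht : ModuleCat.of A t ∈ P.tors)
    (hgreatest : ∀ p : Submodule A M, ModuleCat.of A p ∈ P.tors → p ≤ t) :
    ModuleCat.of A (M ⧸ t) ∈ P.free := by
  refine P.max_free _ inferInstance fun Z hZ w => ?_
  set U := (LinearMap.range w.hom).comap t.mkQ
  have htU : t ≤ U := fun x hx => by
    simp [U, (Submodule.Quotient.mk_eq_zero t).mpr hx]
  have hses : IsSES (ModuleCat.ofHom (Submodule.inclusion htU))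
      (ModuleCat.ofHom ((t.mkQ ∘ₗ U.subtype).codRestrict (LinearMap.range w.hom) (·.2))) := by
    refine ⟨Submodule.inclusion_injective htU, ?_, ?_⟩
    · rintro ⟨_, z, rfl⟩
      obtain ⟨m, hm⟩ := t.mkQ_surjective (w z)
      refine ⟨⟨m, ?_⟩, Subtype.ext hm⟩
      rw [Submodule.mem_comap, hm]
      exact LinearMap.mem_range_self _ z
    · refine fun x => ⟨fun hx => ?_, ?_⟩
      · exact ⟨⟨x, (Submodule.Quotient.mk_eq_zero t).mp congr(Subtype.val $hx)⟩, rfl⟩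
      · rintro ⟨y, rfl⟩
        exact Subtype.ext ((Submodule.Quotient.mk_eq_zero t).mpr y.2)
  have hUt : U ≤ t := hgreatest U (P.mem_tors_of_isSES hses ht (P.range_mem_tors w.hom hZ))
  ext z
  obtain ⟨m, hm⟩ := t.mkQ_surjective (w z)
  have hm' : m ∈ t := hUt (by rw [Submodule.mem_comap, hm]; exact LinearMap.mem_range_self _ z)
  simp [← hm, (Submodule.Quotient.mk_eq_zero t).mpr hm']

theorem exists_torsion_submodule [IsNoetherianRing A] (M : ModuleCat.{u} A) [Module.Finite A M] :
    ∃ t : Submodule A M, ModuleCat.of A t ∈ P.tors ∧ ModuleCat.of A (M ⧸ t) ∈ P.free :=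
  have ⟨t, ht, hgreatest⟩ := P.exists_greatest_torsion_submodule (M := M)
  ⟨t, ht, P.quotient_mem_free_of_greatest ht hgreatest⟩

/-- The canonical sequence `0 → tE → E → E/tE → 0` splits, witnessed by the projection `q` of `E`
onto its torsion part. -/
def SplitsAt (E : ModuleCat.{u} A) : Prop :=
  ∃ q : E ⟶ E, (∀ X ∈ P.tors, ∀ h : X ⟶ E, h ≫ q = h) ∧ (∀ N ∈ P.free, ∀ k : E ⟶ N, q ≫ k = 0)

theorem not_splitsAt_of_isAlmostSplit {L E N : ModuleCat.{u} A} {f : L ⟶ E} {g : E ⟶ N}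
    (h : IsAlmostSplit f g) (hL : L ∈ P.tors) (hN : N ∈ P.free) : ¬ P.SplitsAt E := by
  rintro ⟨q, hq, hq'⟩
  obtain ⟨s, hs⟩ := exists_comp_eq_of_exact h.ses.2.1 h.ses.2.2 (𝟙 E - q) (by simp [hq L hL f])
  have : Epi g := (ModuleCat.epi_iff_surjective g).mpr h.ses.2.1
  refine h.not_split ⟨s, ?_⟩
  rw [← cancel_epi g, reassoc_of% hs]
  simp [hq' N hN g]

section

variable {P}

theorem Splitting.splitsAt [IsArtinianRing A] (hP : P.Splitting)
    (E : ModuleCat.{u} A) [Module.Finite A E] : P.SplitsAt E := by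
  refine ModuleCat.induction_on_indec ?_ ?_ ?_ ?_ E
  · rintro X Y e ⟨q, hq, hq'⟩
    refine ⟨e.inv ≫ q ≫ e.hom, fun Z hZ h => ?_, fun N hN k => ?_⟩
    · rw [← Category.assoc, ← Category.assoc, hq Z hZ, Category.assoc, e.inv_hom_id,
        Category.comp_id]
    · rw [Category.assoc, Category.assoc, hq' N hN, comp_zero]
  · exact fun X hX => ⟨0, fun _ _ h => hX.eq_of_tgt _ _, fun _ _ _ => zero_comp⟩
  · intro X hX hXi
    rcases hP X hX hXi with hT | hF
    · exact ⟨𝟙 X, fun _ _ _ => Category.comp_id _, fun N hN k => by simp [P.hom_zero X hT N hN]⟩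
    · exact ⟨0, fun Z hZ h => by simp [P.hom_zero Z hZ X hF h], fun _ _ _ => zero_comp⟩
  · rintro X Y ⟨q₁, hq₁, hq₁'⟩ ⟨q₂, hq₂, hq₂'⟩
    refine ⟨biprod.map q₁ q₂, fun Z hZ h => biprod.hom_ext _ _ ?_ ?_,
      fun N hN k => biprod.hom_ext' _ _ ?_ ?_⟩
    · simpa using hq₁ Z hZ (h ≫ biprod.fst)
    · simpa using hq₂ Z hZ (h ≫ biprod.snd)
    · simpa using hq₁' N hN (biprod.inl ≫ k)
    · simpa using hq₂' N hN (biprod.inr ≫ k)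

theorem Splitting.tauinv_mem_of_indec [IsArtinianRing A] (hP : P.Splitting)
    (τ : ARTranslation A) {X : ModuleCat.{u} A} (hX : X ∈ P.tors) (hXi : Indec X) :
    τ.τinv X ∈ P.tors := by
  have := P.fg_tors X hX
  by_cases hinj : Injective X
  · exact P.zero_mem_tors (τ.τinv_inj X inferInstance hinj)
  obtain ⟨E, f, g, h⟩ := τ.τinv_spec X inferInstance hXi hinj
  have := τ.fg_τinv X inferInstance
  have : Module.Finite A E := .of_exact (f := f.hom) (g := g.hom) h.ses.2.2 h.ses.2.1
  refine (hP _ inferInstance h.indec_right).resolve_right fun hN => ?_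
  exact P.not_splitsAt_of_isAlmostSplit h hX hN (hP.splitsAt E)

theorem Splitting.tauinv_mem [IsArtinianRing A] (hP : P.Splitting)
    (τ : ARTranslation A) {M : ModuleCat.{u} A} (hM : M ∈ P.tors) : τ.τinv M ∈ P.tors := by
  have := P.fg_tors M hM
  revert hM
  refine ModuleCat.induction_on_indec (Q := fun X => X ∈ P.tors → τ.τinv X ∈ P.tors)
    ?_ ?_ (fun X _ hXi hX => hP.tauinv_mem_of_indec τ hX hXi) ?_ M
  · intro X Y e hX hY
    obtain ⟨e'⟩ := τ.τinv_iso X Y ⟨e⟩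
    exact P.mem_tors_of_iso e' (hX (P.mem_tors_of_iso e.symm hY))
  · exact fun X hX hXT => P.zero_mem_tors (τ.τinv_inj X (P.fg_tors X hXT) hX.injective)
  · intro X Y hX hY hXY
    obtain ⟨e⟩ := τ.τinv_add X Y
    refine P.mem_tors_of_iso e.symm (P.biprod_mem_tors (hX ?_) (hY ?_))
    · exact P.mem_tors_of_isSummand (isSummand_biprod_left X Y) hXY
    · exact P.mem_tors_of_isSummand (isSummand_biprod_right X Y) hXY

end

theorem exists_retraction_of_tauinv_mem (τ : ARTranslation A) {M : ModuleCat.{u} A}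
    {t : Submodule A M} (ht : ModuleCat.of A (M ⧸ t) ∈ P.free) {Y : ModuleCat.{u} A}
    (hY : Y ∈ P.tors) (hYi : Indec Y) (hτY : τ.τinv Y ∈ P.tors) {i : Y ⟶ ModuleCat.of A t}
    {p : ModuleCat.of A t ⟶ Y} (hip : i ≫ p = 𝟙 Y) :
    ∃ r : M ⟶ Y, (i ≫ ModuleCat.ofHom t.subtype) ≫ r = 𝟙 Y := by
  set j := i ≫ ModuleCat.ofHom t.subtype
  by_contra hj
  have hYinj : ¬ Injective Y := fun _ => by
    have : Mono j := (ModuleCat.mono_iff_injective j).mpr <|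
      t.injective_subtype.comp (Function.LeftInverse.injective fun y => congr($hip y))
    exact hj ⟨Injective.factorThru (𝟙 Y) j, Injective.comp_factorThru _ _⟩
  obtain ⟨E, f, g, h⟩ := τ.τinv_spec Y (P.fg_tors Y hY) hYi hYinj
  obtain ⟨u, hu⟩ := h.left_almost M j hj
  -- `u` lands in `t`: composed with `M → M/t` it kills `f`, so factors through `τ⁻¹ Y ∈ T`
  let π : M ⟶ ModuleCat.of A (M ⧸ t) := ModuleCat.ofHom t.mkQ
  have hjπ : j ≫ π = 0 := by
    ext y
    exact (Submodule.Quotient.mk_eq_zero t).mpr (i y).2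
  obtain ⟨w, hw⟩ := exists_comp_eq_of_exact h.ses.2.1 h.ses.2.2 (u ≫ π)
    (by rw [reassoc_of% hu, hjπ])
  have huπ : u ≫ π = 0 := by rw [← hw, P.hom_zero _ hτY _ ht w, comp_zero]
  have hut : ∀ x, u x ∈ t := fun x => (Submodule.Quotient.mk_eq_zero t).mp congr($huπ x)
  have hfu : f ≫ ModuleCat.ofHom (u.hom.codRestrict t hut) = i := by
    ext x
    exact congr($hu x)
  exact h.not_exists_retraction ⟨_, by rw [← Category.assoc, hfu, hip]⟩

theorem splitting_of_tauinv_mem [IsArtinianRing A] (τ : ARTranslation A)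
    (hτ : ∀ M ∈ P.tors, τ.τinv M ∈ P.tors) : P.Splitting := by
  intro M _ hM
  by_contra! hMTF
  obtain ⟨t, ht, htf⟩ := P.exists_torsion_submodule M
  have ht0 : ¬ IsZero (ModuleCat.of A t) := by
    intro hz
    refine hMTF.2 (P.max_free M inferInstance fun X hX u => ?_)
    have huπ := P.hom_zero X hX _ htf (u ≫ ModuleCat.ofHom t.mkQ)
    ext x
    have hx : u x ∈ t := (Submodule.Quotient.mk_eq_zero t).mp congr($huπ x)
    exact congr(Subtype.val $((ModuleCat.subsingleton_of_isZero hz).elim ⟨u x, hx⟩ 0))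
  obtain ⟨Y, hYi, i, p, hip⟩ := ModuleCat.exists_indec_isSummand (.of A t) ht0
  have hY := P.mem_tors_of_isSummand ⟨i, p, hip⟩ ht
  obtain ⟨r, hr⟩ := P.exists_retraction_of_tauinv_mem τ htf hY hYi (hτ Y hY) hip
  obtain ⟨e⟩ := hM.nonempty_iso_of_retract hYi.1 hr
  exact hMTF.1 (P.mem_tors_of_iso e hY)

end TorsionPair

end

theorem stmt1_general (k : Type u) [Field k]
    (A : Type u) [Ring A] [Algebra k A] [FiniteDimensional k A]
    (τ : ARTranslation A) (P : TorsionPair A) :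
    P.Splitting ↔ ∀ M ∈ P.tors, τ.τinv M ∈ P.tors := by
  have : IsArtinianRing A := isArtinian_of_tower k inferInstance
  exact ⟨fun hP _ hM => hP.tauinv_mem τ hM, P.splitting_of_tauinv_mem τ⟩

/-- A torsion pair in mod Λ is splitting iff the torsion class is closed under τ⁻¹. -/
theorem stmt1 (k : Type u) [Field k] [IsAlgClosed k]
    (A : Type u) [Ring A] [Algebra k A] [FiniteDimensional k A]
    (τ : ARTranslation A) (P : TorsionPair A) :
    P.Splitting ↔ ∀ M ∈ P.tors, τ.τinv M ∈ P.tors :=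
  stmt1_general k A τ P
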